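/- Let X be an infinite-dimensional separable real Banach space. Then the following are equivalent: (Cat1) X is ω-categorical; (Cat2) for every finite-dimensional normed space E and every C ≥ 0, the set Emb_C(E,X) is totally bounded modulo Iso(X), i.e. for every ε > 0 there exists a finite set S ⊆ Emb_C(E,X) such that for every f ∈ Emb_C(E,X) there are g ∈ S and T ∈ Iso(X) with ‖f − T∘g‖ < ε; (Cat3) there exists C′ > 0 such that for every C ∈ (0, C′) and every finite-dimensional normed space E finitely representable in X, the set Emb_C(E,X) is totally bounded modulo Iso(X) in the same sense. -/

import Mathlib

/-!
(1 ⇒ 2): an operator on a finite-dimensional `E` is controlled in norm by its values on a basis,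
so a net modulo `Iso(X)` for the tuples of basis images is a net for `Emb_C(E, X)`.

(3 ⇒ 1): by Riesz's lemma in the infinite-dimensional `X`, every tuple in the unit ball is close
to a tuple `y` whose synthesis map `a ↦ ∑ aᵢ yᵢ` is bounded below by a constant depending only on
`n`. The norms `‖∑ aᵢ yᵢ‖` of such tuples are, up to a small relative error, among finitely many
`‖∑ aᵢ vᵢ‖`; then `vᵢ ↦ yᵢ` lies in `Emb_C(span v, X)`, and `span v` is finitely representable
in `X`, so the nets given by (3) for the finitely many `span v` together yield a net of tuples.
-/

noncomputable section

open Real Metric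

/-- A bundled finite-dimensional real normed space. -/
structure FinNormedSpace where
  carrier : Type
  [grp : NormedAddCommGroup carrier]
  [mod : NormedSpace ℝ carrier]
  [fd : FiniteDimensional ℝ carrier]

attribute [instance] FinNormedSpace.grp FinNormedSpace.mod FinNormedSpace.fd

instance : CoeSort FinNormedSpace Type := ⟨FinNormedSpace.carrier⟩

/-- `T ∈ Emb_C(E, F)`. -/
def IsEmbC {E F : Type*} [NormedAddCommGroup E] [NormedSpace ℝ E]
    [NormedAddCommGroup F] [NormedSpace ℝ F] (C : ℝ) (T : E →L[ℝ] F) : Prop :=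
  ∀ x : E, Real.exp (-C) * ‖x‖ ≤ ‖T x‖ ∧ ‖T x‖ ≤ Real.exp C * ‖x‖

/-- `T ∈ Emb(E, F)`, i.e. `T` is a linear isometric embedding. -/
def IsIsomEmb {E F : Type*} [NormedAddCommGroup E] [NormedSpace ℝ E]
    [NormedAddCommGroup F] [NormedSpace ℝ F] (T : E →L[ℝ] F) : Prop :=
  ∀ x : E, ‖T x‖ = ‖x‖

/-- The continuous linear map underlying a surjective linear isometry. -/
def toCLM {X Y : Type*} [NormedAddCommGroup X] [NormedSpace ℝ X]
    [NormedAddCommGroup Y] [NormedSpace ℝ Y] (T : X ≃ₗᵢ[ℝ] Y) : X →L[ℝ] Y :=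
  T.toLinearIsometry.toContinuousLinearMap

/-- `F` is finitely representable in `X`. -/
def FinRep (F : FinNormedSpace) (X : Type*) [NormedAddCommGroup X]
    [NormedSpace ℝ X] : Prop :=
  ∀ ε : ℝ, 0 < ε → ∃ T : F.carrier →L[ℝ] X, IsEmbC ε T

/-- The inclusion of a submodule into a larger one, as a continuous linear map. -/
def inclCLM {X : Type*} [NormedAddCommGroup X] [NormedSpace ℝ X]
    {E F : Submodule ℝ X} (h : E ≤ F) : E →L[ℝ] F :=
  (Submodule.subtypeL E).codRestrict F (fun x => h x.2)

/-- `X` is ω-categorical (ε-net formulation of compactness of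
`(B_X)^n ⫽ Iso(X)`). -/
def OmegaCategorical (X : Type*) [NormedAddCommGroup X] [NormedSpace ℝ X] : Prop :=
  ∀ n : ℕ, ∀ ε : ℝ, 0 < ε →
    ∃ S : Set (Fin n → X), S.Finite ∧ (∀ x ∈ S, ∀ i, ‖x i‖ ≤ 1) ∧
      ∀ y : Fin n → X, (∀ i, ‖y i‖ ≤ 1) →
        ∃ x ∈ S, ∃ T : X ≃ₗᵢ[ℝ] X, ∀ i, ‖y i - T (x i)‖ < ε

/-- `Emb_C(E, X)` is totally bounded modulo `Iso(X)`. -/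
def TotallyBoundedModIso (E : Type*) [NormedAddCommGroup E] [NormedSpace ℝ E]
    (X : Type*) [NormedAddCommGroup X] [NormedSpace ℝ X] (C : ℝ) : Prop :=
  ∀ ε : ℝ, 0 < ε →
    ∃ S : Set (E →L[ℝ] X), S.Finite ∧ (∀ g ∈ S, IsEmbC C g) ∧
      ∀ f : E →L[ℝ] X, IsEmbC C f →
        ∃ g ∈ S, ∃ T : X ≃ₗᵢ[ℝ] X, ‖f - (toCLM T).comp g‖ < ε

open Set

theorem exists_finite_subset_of_finite_cover {α β : Type*} {r : α → β → Prop}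
    {r' : α → α → Prop} (hr : ∀ a b x, r a x → r b x → r' a b) {s : Set α} {S : Set β}
    (hS : S.Finite) (hcover : ∀ a ∈ s, ∃ x ∈ S, r a x) :
    ∃ t ⊆ s, t.Finite ∧ ∀ a ∈ s, ∃ b ∈ t, r' a b := by
  have hpick : ∀ x : {x ∈ S | ∃ a ∈ s, r a x}, ∃ a ∈ s, r a x.1 := fun x => x.2.2
  choose pick hpick_mem hpick_r using hpick
  have : Finite {x ∈ S | ∃ a ∈ s, r a x} := (hS.subset (sep_subset _ _)).to_subtype
  refine ⟨range pick, range_subset_iff.2 hpick_mem, finite_range pick, fun a ha => ?_⟩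
  obtain ⟨x, hxS, hax⟩ := hcover a ha
  exact ⟨_, mem_range_self ⟨x, hxS, a, ha, hax⟩, hr _ _ _ hax (hpick_r _)⟩

section IsoClose

variable {X : Type*} [NormedAddCommGroup X] [NormedSpace ℝ X] {n : ℕ}

def IsoClose (ε : ℝ) (x y : Fin n → X) : Prop :=
  ∃ T : X ≃ₗᵢ[ℝ] X, ∀ i, ‖x i - T (y i)‖ < ε

theorem IsoClose.symm {ε : ℝ} {x y : Fin n → X} (h : IsoClose ε x y) : IsoClose ε y x := by
  obtain ⟨T, hT⟩ := h
  refine ⟨T.symm, fun i => ?_⟩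
  rw [← T.norm_map, map_sub, T.apply_symm_apply, norm_sub_rev]
  exact hT i

theorem IsoClose.trans {ε δ : ℝ} {x y z : Fin n → X} (hxy : IsoClose ε x y)
    (hyz : IsoClose δ y z) : IsoClose (ε + δ) x z := by
  obtain ⟨T, hT⟩ := hxy
  obtain ⟨U, hU⟩ := hyz
  refine ⟨U.trans T, fun i => ?_⟩
  calc ‖x i - T (U (z i))‖ ≤ ‖x i - T (y i)‖ + ‖T (y i) - T (U (z i))‖ :=
        norm_sub_le_norm_sub_add_norm_sub _ _ _
    _ < ε + δ := by
        rw [← map_sub, T.norm_map]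
        exact add_lt_add (hT i) (hU i)

theorem OmegaCategorical.exists_finite_subset_isoClose (h : OmegaCategorical X) {α : Type*}
    {s : Set α} (Φ : α → Fin n → X) (hΦ : ∀ a ∈ s, ∀ i, ‖Φ a i‖ ≤ 1) {ε : ℝ} (hε : 0 < ε) :
    ∃ t ⊆ s, t.Finite ∧ ∀ a ∈ s, ∃ b ∈ t, IsoClose ε (Φ a) (Φ b) := by
  obtain ⟨S, hS, -, hcover⟩ := h n (ε / 2) (half_pos hε)
  simpa only [add_halves] using exists_finite_subset_of_finite_cover
    (r := fun a x => IsoClose (ε / 2) (Φ a) x) (fun _ _ _ hax hbx => hax.trans hbx.symm) hS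
    fun a ha => hcover _ (hΦ a ha)

theorem omegaCategorical_of_finite_isoClose_cover
    (h : ∀ (n : ℕ) (ε : ℝ), 0 < ε → ∃ S : Set (Fin n → X), S.Finite ∧
      ∀ y : Fin n → X, (∀ i, ‖y i‖ ≤ 1) → ∃ x ∈ S, IsoClose ε y x) :
    OmegaCategorical X := by
  intro n ε hε
  obtain ⟨S, hS, hcover⟩ := h n (ε / 2) (half_pos hε)
  obtain ⟨t, hts, ht, htcover⟩ := exists_finite_subset_of_finite_cover
    (s := {y : Fin n → X | ∀ i, ‖y i‖ ≤ 1}) (fun _ _ _ hax hbx => hax.trans hbx.symm) hS hcover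
  exact ⟨t, ht, fun x hx => hts hx, fun y hy => by
    have := htcover y hy
    rwa [add_halves] at this⟩

end IsoClose

section Embeddings

variable {E F : Type*} [NormedAddCommGroup E] [NormedSpace ℝ E]
  [NormedAddCommGroup F] [NormedSpace ℝ F]

@[simp]
theorem toCLM_apply (T : E ≃ₗᵢ[ℝ] F) (x : E) : toCLM T x = T x := rfl

theorem IsIsomEmb.isEmbC {T : E →L[ℝ] F} (hT : IsIsomEmb T) {C : ℝ} (hC : 0 ≤ C) :
    IsEmbC C T := fun x => by
  rw [hT x]
  exact ⟨mul_le_of_le_one_left (norm_nonneg x) (exp_le_one_iff.2 (neg_nonpos.2 hC)),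
    le_mul_of_one_le_left (norm_nonneg x) (one_le_exp hC)⟩

theorem isEmbC_of_abs_norm_sub_le {T : E →L[ℝ] F} {C : ℝ}
    (h : ∀ x, |‖T x‖ - ‖x‖| ≤ (1 - exp (-C)) * ‖x‖) : IsEmbC C T := fun x => by
  have hx := abs_le.1 (h x)
  have hcosh : 2 - exp (-C) ≤ exp C := by
    linarith [add_one_le_exp C, add_one_le_exp (-C)]
  constructor
  · linarith
  · nlinarith [norm_nonneg x]

theorem OmegaCategorical.totallyBoundedModIso {X : Type*} [NormedAddCommGroup X]
    [NormedSpace ℝ X] (h : OmegaCategorical X) [FiniteDimensional ℝ E] (C : ℝ) :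
    TotallyBoundedModIso E X C := by
  intro ε hε
  let b := Module.finBasis ℝ E
  obtain ⟨K, hK, hKb⟩ := b.exists_opNorm_le (F := X)
  set R := exp C * (1 + ∑ i, ‖b i‖)
  have hR : 0 < R := by positivity
  have hbR : ∀ f : E →L[ℝ] X, IsEmbC C f → ∀ i, ‖f (b i)‖ ≤ R := fun f hf i =>
    (hf (b i)).2.trans <| mul_le_mul_of_nonneg_left (le_add_of_nonneg_of_le zero_le_one
      (Finset.single_le_sum (fun j _ => norm_nonneg (b j)) (Finset.mem_univ i))) (exp_pos C).le
  obtain ⟨t, hts, ht, htcover⟩ := h.exists_finite_subset_isoClose (s := {f | IsEmbC C f})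
    (fun f i => R⁻¹ • f (b i)) (fun f hf i => by
      rw [norm_smul, norm_inv, Real.norm_of_nonneg hR.le]
      exact inv_mul_le_one_of_le₀ (hbR f hf i) hR.le)
    (ε := ε / (2 * K * R)) (by positivity)
  refine ⟨t, ht, hts, fun f hf => ?_⟩
  obtain ⟨g, hgt, T, hT⟩ := htcover f hf
  refine ⟨g, hgt, T, ?_⟩
  have hbasis : ∀ i, ‖(f - (toCLM T).comp g) (b i)‖ ≤ R * (ε / (2 * K * R)) := fun i => by
    have : (f - (toCLM T).comp g) (b i) = R • (R⁻¹ • f (b i) - T (R⁻¹ • g (b i))) := by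
      simp [smul_sub, smul_smul, hR.ne']
    rw [this, norm_smul, Real.norm_of_nonneg hR.le]
    exact mul_le_mul_of_nonneg_left (hT i).le hR.le
  calc ‖f - (toCLM T).comp g‖ ≤ K * (R * (ε / (2 * K * R))) := hKb (by positivity) hbasis
    _ < ε := by field_simp; linarith

end Embeddings

section RieszTuples

variable {X : Type*} [NormedAddCommGroup X] [NormedSpace ℝ X]

theorem exists_norm_eq_one_forall_abs_le_two_mul_norm (hX : ¬ FiniteDimensional ℝ X)
    (W : Submodule ℝ X) [FiniteDimensional ℝ W] :
    ∃ z : X, ‖z‖ = 1 ∧ ∀ w ∈ W, ∀ t : ℝ, |t| ≤ 2 * ‖t • z + w‖ := by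
  have hW : ∃ x : X, x ∉ W := by
    by_contra! h
    exact hX (Module.Finite.equiv ((Submodule.eq_top_iff'.2 h) ▸ Submodule.topEquiv))
  obtain ⟨z, -, hz1, hz⟩ :=
    riesz_lemma_of_lt_one W.closed_of_finiteDimensional hW (r := 1 / 2) (by norm_num)
  refine ⟨z, hz1, fun w hw t => ?_⟩
  rcases eq_or_ne t 0 with rfl | ht
  · simp
  have hzw := hz (-t⁻¹ • w) (W.smul_mem _ hw)
  have hscale : t • (z - -t⁻¹ • w) = t • z + w := by
    rw [smul_sub, smul_smul, mul_neg, mul_inv_cancel₀ ht, neg_one_smul, sub_neg_eq_add]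
  calc |t| = 2 * (|t| * (1 / 2)) := by ring
    _ ≤ 2 * (|t| * ‖z - -t⁻¹ • w‖) := by gcongr
    _ = 2 * ‖t • z + w‖ := by rw [← hscale, norm_smul, Real.norm_eq_abs]

theorem exists_tuple_norm_le_norm_add_linearCombination (hX : ¬ FiniteDimensional ℝ X)
    (V : Submodule ℝ X) [FiniteDimensional ℝ V] :
    ∀ n : ℕ, ∃ z : Fin n → X, (∀ i, ‖z i‖ ≤ 1) ∧
      ∀ w ∈ V, ∀ a : Fin n → ℝ, ‖a‖ ≤ 2 * 3 ^ n * ‖w + Fintype.linearCombination ℝ z a‖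
  | 0 => ⟨finZeroElim, finZeroElim, fun w _ a => by rw [Subsingleton.elim a 0, norm_zero]; positivity⟩
  | n + 1 => by
    obtain ⟨z, hz1, hz⟩ := exists_tuple_norm_le_norm_add_linearCombination hX V n
    have := FiniteDimensional.span_of_finite ℝ (Set.finite_range z)
    obtain ⟨z', hz'1, hz'⟩ :=
      exists_norm_eq_one_forall_abs_le_two_mul_norm hX (V ⊔ Submodule.span ℝ (Set.range z))
    refine ⟨Fin.snoc z z', Fin.lastCases (by simp [hz'1]) (by simpa using hz1), fun w hw a => ?_⟩
    set x := w + Fintype.linearCombination ℝ (Fin.snoc z z') a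
    set u := w + Fintype.linearCombination ℝ z (fun i => a i.castSucc)
    have hxu : x = a (Fin.last n) • z' + u := by
      simp [x, u, Fintype.linearCombination_apply, Fin.sum_univ_castSucc]
      abel
    have hu : u ∈ V ⊔ Submodule.span ℝ (Set.range z) :=
      Submodule.add_mem _ (Submodule.mem_sup_left hw) (Submodule.mem_sup_right
        (Fintype.range_linearCombination ℝ z ▸ LinearMap.mem_range_self _ _))
    -- Riesz controls the last coefficient; the others then cost a factor `3` by induction.
    have hlast : |a (Fin.last n)| ≤ 2 * ‖x‖ := hxu ▸ hz' u hu _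
    have hux : ‖u‖ ≤ 3 * ‖x‖ := by
      have : u = x - a (Fin.last n) • z' := by rw [hxu]; abel
      rw [this]
      refine (norm_sub_le _ _).trans ?_
      rw [norm_smul, hz'1, Real.norm_eq_abs]
      linarith
    have hinit : ‖fun i : Fin n => a i.castSucc‖ ≤ 2 * 3 ^ (n + 1) * ‖x‖ := by
      calc _ ≤ 2 * 3 ^ n * ‖u‖ := hz w hw _
        _ ≤ 2 * 3 ^ n * (3 * ‖x‖) := by gcongr
        _ = 2 * 3 ^ (n + 1) * ‖x‖ := by ring
    refine (pi_norm_le_iff_of_nonneg (by positivity)).2 (Fin.lastCases ?_ fun i => ?_)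
    · rw [Real.norm_eq_abs]
      refine hlast.trans (mul_le_mul_of_nonneg_right ?_ (norm_nonneg x))
      have : (1 : ℝ) ≤ 3 ^ (n + 1) := one_le_pow₀ (by norm_num)
      linarith
    · exact (norm_le_pi_norm (fun i => a i.castSucc) i).trans hinit

theorem exists_near_tuple_mul_norm_le_norm_linearCombination (hX : ¬ FiniteDimensional ℝ X)
    {n : ℕ} {y : Fin n → X} (hy : ∀ i, ‖y i‖ ≤ 1) {η : ℝ} (hη0 : 0 < η) (hη1 : η ≤ 1) :
    ∃ y' : Fin n → X, (∀ i, ‖y' i‖ ≤ 1) ∧ (∀ i, ‖y i - y' i‖ ≤ 2 * η) ∧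
      ∀ a : Fin n → ℝ, η / (2 * 3 ^ n) * ‖a‖ ≤ ‖Fintype.linearCombination ℝ y' a‖ := by
  have := FiniteDimensional.span_of_finite ℝ (Set.finite_range y)
  obtain ⟨z, hz1, hz⟩ :=
    exists_tuple_norm_le_norm_add_linearCombination hX (Submodule.span ℝ (Set.range y)) n
  refine ⟨fun i => (1 - η) • y i + η • z i, fun i => ?_, fun i => ?_, fun a => ?_⟩
  · calc _ ≤ ‖(1 - η) • y i‖ + ‖η • z i‖ := norm_add_le _ _
      _ ≤ (1 - η) * 1 + η * 1 := by
          rw [norm_smul, norm_smul, Real.norm_of_nonneg (by linarith),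
            Real.norm_of_nonneg hη0.le]
          exact add_le_add (mul_le_mul_of_nonneg_left (hy i) (by linarith))
            (mul_le_mul_of_nonneg_left (hz1 i) hη0.le)
      _ = 1 := by ring
  · calc _ = ‖η • (y i - z i)‖ := by congr 1; module
      _ ≤ η * (1 + 1) := by
          rw [norm_smul, Real.norm_of_nonneg hη0.le]
          gcongr
          exact (norm_sub_le _ _).trans (add_le_add (hy i) (hz1 i))
      _ = 2 * η := by ring
  · have hsplit : Fintype.linearCombination ℝ (fun i => (1 - η) • y i + η • z i) a =
        (1 - η) • Fintype.linearCombination ℝ y a + Fintype.linearCombination ℝ z (η • a) := by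
      simp only [Fintype.linearCombination_apply, smul_add, Finset.sum_add_distrib,
        Finset.smul_sum, Pi.smul_apply, smul_smul, smul_eq_mul, mul_comm]
    have hw : (1 - η) • Fintype.linearCombination ℝ y a ∈ Submodule.span ℝ (Set.range y) :=
      Submodule.smul_mem _ _ (Fintype.range_linearCombination ℝ y ▸ LinearMap.mem_range_self _ _)
    have := hz _ hw (η • a)
    rw [norm_smul, Real.norm_of_nonneg hη0.le, ← hsplit] at this
    rw [div_mul_eq_mul_div, div_le_iff₀ (by positivity)]
    linarith

end RieszTuples

section TupleSpan

variable {X : Type*} [NormedAddCommGroup X] [NormedSpace ℝ X] {n : ℕ}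

/-- `ℝⁿ` normed by `a ↦ ‖∑ aᵢ • vᵢ‖`, an isometric copy of `span ℝ (range v)`; unlike the span
it lives in `Type`, as `FinNormedSpace` requires. -/
def TupleSpan (_v : Fin n → X) : Type := Fin n → ℝ

namespace TupleSpan

variable (v : Fin n → X)

instance : AddCommGroup (TupleSpan v) := inferInstanceAs (AddCommGroup (Fin n → ℝ))

instance : Module ℝ (TupleSpan v) := inferInstanceAs (Module ℝ (Fin n → ℝ))

instance : FiniteDimensional ℝ (TupleSpan v) := inferInstanceAs (FiniteDimensional ℝ (Fin n → ℝ))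

def linearCombination (y : Fin n → X) : TupleSpan v →ₗ[ℝ] X := Fintype.linearCombination ℝ y

variable [Fact (LinearIndependent ℝ v)]

instance : NormedAddCommGroup (TupleSpan v) :=
  NormedAddCommGroup.induced _ _ (linearCombination v v)
    (Fact.out : LinearIndependent ℝ v).fintypeLinearCombination_injective

instance : NormedSpace ℝ (TupleSpan v) := NormedSpace.induced ℝ _ X (linearCombination v v)

theorem norm_def (a : TupleSpan v) : ‖a‖ = ‖Fintype.linearCombination ℝ v a‖ := rfl

def linearCombinationL (y : Fin n → X) : TupleSpan v →L[ℝ] X :=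
  LinearMap.toContinuousLinearMap (linearCombination v y)

theorem linearCombinationL_apply (y : Fin n → X) (a : TupleSpan v) :
    linearCombinationL v y a = Fintype.linearCombination ℝ y a := rfl

theorem finRep : FinRep ⟨TupleSpan v⟩ X := fun _ hε =>
  ⟨linearCombinationL v v, IsIsomEmb.isEmbC (fun a => (norm_def v a).symm) hε.le⟩

theorem isEmbC_linearCombinationL {c C : ℝ} (hC : 0 ≤ C)
    (hv : ∀ a : Fin n → ℝ, c * ‖a‖ ≤ ‖Fintype.linearCombination ℝ v a‖) {y : Fin n → X}
    (hy : ∀ a : Fin n → ℝ, |‖Fintype.linearCombination ℝ y a‖ -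
      ‖Fintype.linearCombination ℝ v a‖| ≤ c * (1 - exp (-C)) * ‖a‖) :
    IsEmbC C (linearCombinationL v y) :=
  have key (a : Fin n → ℝ) : |‖Fintype.linearCombination ℝ y a‖ -
      ‖Fintype.linearCombination ℝ v a‖| ≤ (1 - exp (-C)) * ‖Fintype.linearCombination ℝ v a‖ :=
    calc _ ≤ c * (1 - exp (-C)) * ‖a‖ := hy a
      _ = (1 - exp (-C)) * (c * ‖a‖) := by ring
      _ ≤ _ := mul_le_mul_of_nonneg_left (hv a) (sub_nonneg.2 (exp_le_one_iff.2 (neg_nonpos.2 hC)))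
  isEmbC_of_abs_norm_sub_le fun a => key a

end TupleSpan

theorem linearIndependent_of_mul_norm_le {v : Fin n → X} {c : ℝ} (hc : 0 < c)
    (hv : ∀ a : Fin n → ℝ, c * ‖a‖ ≤ ‖Fintype.linearCombination ℝ v a‖) :
    LinearIndependent ℝ v := by
  refine linearIndependent_iff_injective_fintypeLinearCombination.2 fun a b hab => ?_
  have := hv (a - b)
  rw [map_sub, hab, sub_self, norm_zero] at this
  exact sub_eq_zero.1 (norm_le_zero_iff.1 (nonpos_of_mul_nonpos_right this hc))

theorem exists_finite_isoClose_cover_of_abs_norm_sub_le {C c ε : ℝ}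
    (hTB : ∀ E : FinNormedSpace, FinRep E X → TotallyBoundedModIso E X C) (hC : 0 ≤ C)
    (hc : 0 < c) (hε : 0 < ε) {v : Fin n → X} (hv1 : ∀ i, ‖v i‖ ≤ 1)
    (hv : ∀ a : Fin n → ℝ, c * ‖a‖ ≤ ‖Fintype.linearCombination ℝ v a‖) :
    ∃ S : Set (Fin n → X), S.Finite ∧ ∀ y : Fin n → X,
      (∀ a : Fin n → ℝ, |‖Fintype.linearCombination ℝ y a‖ -
        ‖Fintype.linearCombination ℝ v a‖| ≤ c * (1 - exp (-C)) * ‖a‖) →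
      ∃ x ∈ S, IsoClose ε y x := by
  have : Fact (LinearIndependent ℝ v) := ⟨linearIndependent_of_mul_norm_le hc hv⟩
  let e : Fin n → TupleSpan v := fun i => Pi.single i 1
  have he : ∀ i, ‖e i‖ ≤ 1 := fun i => by
    rw [TupleSpan.norm_def, Fintype.linearCombination_apply_single, one_smul]
    exact hv1 i
  obtain ⟨S, hS, -, hcover⟩ := hTB ⟨TupleSpan v⟩ (TupleSpan.finRep v) ε hε
  refine ⟨(fun g i => g (e i)) '' S, hS.image _, fun y hy => ?_⟩
  obtain ⟨g, hgS, T, hT⟩ := hcover _ (TupleSpan.isEmbC_linearCombinationL v hC hv hy)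
  refine ⟨_, mem_image_of_mem _ hgS, T, fun i => ?_⟩
  have hyi : y i = TupleSpan.linearCombinationL v y (e i) := by
    rw [TupleSpan.linearCombinationL_apply, Fintype.linearCombination_apply_single, one_smul]
  calc ‖y i - T (g (e i))‖ = ‖(TupleSpan.linearCombinationL v y - (toCLM T).comp g) (e i)‖ := by
        rw [hyi]; rfl
    _ ≤ ‖TupleSpan.linearCombinationL v y - (toCLM T).comp g‖ * 1 :=
        ((TupleSpan.linearCombinationL v y - (toCLM T).comp g).le_opNorm _).trans
          (mul_le_mul_of_nonneg_left (he i) (norm_nonneg _))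
    _ < ε := by rwa [mul_one]

end TupleSpan

section SeminormNet

variable {X : Type*} [NormedAddCommGroup X] [NormedSpace ℝ X] {n : ℕ}

theorem norm_linearCombination_le {y : Fin n → X} (hy : ∀ i, ‖y i‖ ≤ 1) (a : Fin n → ℝ) :
    ‖Fintype.linearCombination ℝ y a‖ ≤ n * ‖a‖ := by
  rw [Fintype.linearCombination_apply]
  refine (norm_sum_le _ _).trans ?_
  calc ∑ i, ‖a i • y i‖ ≤ ∑ _i : Fin n, ‖a‖ := Finset.sum_le_sum fun i _ => by
        rw [norm_smul]
        exact mul_le_of_le_one_right (norm_nonneg _) (hy i) |>.trans (norm_le_pi_norm a i)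
    _ = n * ‖a‖ := by simp

theorem abs_norm_linearCombination_sub_le {y : Fin n → X} (hy : ∀ i, ‖y i‖ ≤ 1)
    (a b : Fin n → ℝ) :
    |‖Fintype.linearCombination ℝ y a‖ - ‖Fintype.linearCombination ℝ y b‖| ≤ n * ‖a - b‖ :=
  (abs_norm_sub_norm_le _ _).trans (map_sub (Fintype.linearCombination ℝ y) a b ▸
    norm_linearCombination_le hy _)

theorem LinearMap.abs_norm_sub_norm_le_mul_norm {E F : Type*} [NormedAddCommGroup E]
    [NormedSpace ℝ E] [SeminormedAddCommGroup F] [NormedSpace ℝ F] (L M : E →ₗ[ℝ] F) {δ : ℝ}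
    (h : ∀ x, ‖x‖ ≤ 1 → |‖L x‖ - ‖M x‖| ≤ δ) (x : E) : |‖L x‖ - ‖M x‖| ≤ δ * ‖x‖ := by
  rcases eq_or_ne x 0 with rfl | hx
  · simp
  have hx' : 0 < ‖x‖ := norm_pos_iff.2 hx
  have := h (‖x‖⁻¹ • x) (norm_smul_inv_norm hx).le
  rw [map_smul, map_smul, norm_smul, norm_smul, ← mul_sub, abs_mul, norm_inv, norm_norm,
    abs_of_pos (inv_pos.2 hx'), inv_mul_le_iff₀ hx'] at this
  linarith

theorem exists_finite_subset_abs_norm_linearCombination_sub_le (s : Set (Fin n → X))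
    (hs : ∀ y ∈ s, ∀ i, ‖y i‖ ≤ 1) {δ : ℝ} (hδ : 0 < δ) :
    ∃ J ⊆ s, J.Finite ∧ ∀ y ∈ s, ∃ v ∈ J, ∀ a : Fin n → ℝ,
      |‖Fintype.linearCombination ℝ y a‖ - ‖Fintype.linearCombination ℝ v a‖| ≤ δ * ‖a‖ := by
  obtain ⟨A, hA1, hA, hAcover⟩ := finite_approx_of_totallyBounded
    (isCompact_closedBall (0 : Fin n → ℝ) 1).totallyBounded (δ / (4 * (n + 1))) (by positivity)
  have := hA.fintype
  let Φ : (Fin n → X) → (A → ℝ) := fun y a => ‖Fintype.linearCombination ℝ y a‖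
  have hΦ : Φ '' s ⊆ closedBall 0 n := by
    rintro _ ⟨y, hy, rfl⟩
    refine mem_closedBall_zero_iff.2 ((pi_norm_le_iff_of_nonneg (by positivity)).2 fun a => ?_)
    rw [norm_norm]
    refine (norm_linearCombination_le (hs y hy) a).trans (mul_le_of_le_one_right n.cast_nonneg ?_)
    simpa using hA1 a.2
  obtain ⟨P, hPs, hP, hPcover⟩ := finite_approx_of_totallyBounded
    ((isCompact_closedBall _ _).totallyBounded.subset hΦ) (δ / 4) (by positivity)
  obtain ⟨J, hJs, hJ, hJcover⟩ := exists_finite_subset_of_finite_cover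
    (r := fun y p => dist (Φ y) p < δ / 4) (r' := fun y v => dist (Φ y) (Φ v) < δ / 2)
    (fun y v p hy hv => by linarith [dist_triangle_right (Φ y) (Φ v) p]) hP
    fun y hy => by simpa using hPcover (mem_image_of_mem Φ hy)
  refine ⟨J, hJs, hJ, fun y hy => ?_⟩
  obtain ⟨v, hvJ, hyv⟩ := hJcover y hy
  refine ⟨v, hvJ, LinearMap.abs_norm_sub_norm_le_mul_norm _ _ fun a ha => ?_⟩
  obtain ⟨a', ha'A, haa'⟩ : ∃ a' ∈ A, dist a a' < δ / (4 * (n + 1)) := by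
    simpa using hAcover (mem_closedBall_zero_iff.2 ha)
  have hlip : ∀ w ∈ s, |‖Fintype.linearCombination ℝ w a‖ -
      ‖Fintype.linearCombination ℝ w a'‖| ≤ δ / 4 := fun w hw => by
    refine (abs_norm_linearCombination_sub_le (hs w hw) a a').trans ?_
    rw [← dist_eq_norm]
    calc (n : ℝ) * dist a a' ≤ (n + 1) * (δ / (4 * (n + 1))) := by gcongr; linarith
      _ = δ / 4 := by field_simp
  have hmid : |Φ y ⟨a', ha'A⟩ - Φ v ⟨a', ha'A⟩| < δ / 2 :=
    (dist_le_pi_dist (Φ y) (Φ v) ⟨a', ha'A⟩).trans_lt hyv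
  have := hlip y hy
  have := hlip v (hJs hvJ)
  simp only [Φ] at hmid
  rw [abs_le] at *
  constructor <;> linarith [abs_lt.1 hmid]

end SeminormNet

section ThreeOne

variable {X : Type*} [NormedAddCommGroup X] [NormedSpace ℝ X]

theorem exists_finite_isoClose_cover_of_mul_norm_le {C c ε : ℝ} {n : ℕ}
    (hTB : ∀ E : FinNormedSpace, FinRep E X → TotallyBoundedModIso E X C) (hC : 0 < C)
    (hc : 0 < c) (hε : 0 < ε) :
    ∃ S : Set (Fin n → X), S.Finite ∧ ∀ y : Fin n → X, (∀ i, ‖y i‖ ≤ 1) →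
      (∀ a : Fin n → ℝ, c * ‖a‖ ≤ ‖Fintype.linearCombination ℝ y a‖) →
      ∃ x ∈ S, IsoClose ε y x := by
  set s : Set (Fin n → X) :=
    {v | (∀ i, ‖v i‖ ≤ 1) ∧ ∀ a : Fin n → ℝ, c * ‖a‖ ≤ ‖Fintype.linearCombination ℝ v a‖}
  obtain ⟨J, hJs, hJ, hJcover⟩ := exists_finite_subset_abs_norm_linearCombination_sub_le s
    (fun _ hv => hv.1) (δ := c * (1 - exp (-C)))
    (mul_pos hc (sub_pos.2 (exp_lt_one_iff.2 (neg_lt_zero.2 hC))))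
  have hcover : ∀ v ∈ s, ∃ S : Set (Fin n → X), S.Finite ∧ ∀ y : Fin n → X,
      (∀ a : Fin n → ℝ, |‖Fintype.linearCombination ℝ y a‖ -
        ‖Fintype.linearCombination ℝ v a‖| ≤ c * (1 - exp (-C)) * ‖a‖) →
      ∃ x ∈ S, IsoClose ε y x := fun v hv =>
    exists_finite_isoClose_cover_of_abs_norm_sub_le hTB hC.le hc hε hv.1 hv.2
  choose! S hS hScover using hcover
  refine ⟨⋃ v ∈ J, S v, hJ.biUnion fun v hv => hS v (hJs hv), fun y hy1 hy => ?_⟩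
  obtain ⟨v, hvJ, hyv⟩ := hJcover y ⟨hy1, hy⟩
  obtain ⟨x, hx, hyx⟩ := hScover v (hJs hvJ) y hyv
  exact ⟨x, mem_biUnion hvJ hx, hyx⟩

theorem omegaCategorical_of_totallyBoundedModIso (hX : ¬ FiniteDimensional ℝ X) {C : ℝ}
    (hC : 0 < C) (hTB : ∀ E : FinNormedSpace, FinRep E X → TotallyBoundedModIso E X C) :
    OmegaCategorical X := by
  refine omegaCategorical_of_finite_isoClose_cover fun n ε hε => ?_
  set η := min (ε / 4) 1
  have hη0 : 0 < η := lt_min (by positivity) one_pos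
  obtain ⟨S, hS, hcover⟩ := exists_finite_isoClose_cover_of_mul_norm_le (n := n) hTB hC
    (c := η / (2 * 3 ^ n)) (by positivity) (half_pos hε)
  refine ⟨S, hS, fun y hy => ?_⟩
  obtain ⟨y', hy'1, hyy', hy'⟩ :=
    exists_near_tuple_mul_norm_le_norm_linearCombination hX hy hη0 (min_le_right _ _)
  obtain ⟨x, hxS, T, hT⟩ := hcover y' hy'1 hy'
  refine ⟨x, hxS, T, fun i => ?_⟩
  calc ‖y i - T (x i)‖ ≤ ‖y i - y' i‖ + ‖y' i - T (x i)‖ := norm_sub_le_norm_sub_add_norm_sub _ _ _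
    _ < 2 * η + ε / 2 := add_lt_add_of_le_of_lt (hyy' i) (hT i)
    _ ≤ ε := by linarith [min_le_left (ε / 4) 1]

end ThreeOne

theorem omegaCategorical_tfae_general (X : Type*) [NormedAddCommGroup X]
    [NormedSpace ℝ X]
    (hinf : ¬ FiniteDimensional ℝ X) :
    List.TFAE
      [OmegaCategorical X,
       ∀ (E : FinNormedSpace) (C : ℝ), 0 ≤ C → TotallyBoundedModIso E.carrier X C,
       ∃ C' : ℝ, 0 < C' ∧ ∀ C : ℝ, 0 < C → C < C' →
         ∀ E : FinNormedSpace, FinRep E X → TotallyBoundedModIso E.carrier X C] := by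
  tfae_have 1 → 2 := fun h E C _ => h.totallyBoundedModIso C
  tfae_have 2 → 3 := fun h => ⟨1, one_pos, fun C hC _ E _ => h E C hC.le⟩
  tfae_have 3 → 1 := fun ⟨C', hC', h⟩ => omegaCategorical_of_totallyBoundedModIso hinf
    (half_pos hC') (h _ (half_pos hC') (half_lt_self hC'))
  tfae_finish

/-- Characterizations of ω-categoricity. -/
theorem omegaCategorical_tfae (X : Type*) [NormedAddCommGroup X]
    [NormedSpace ℝ X] [CompleteSpace X] [TopologicalSpace.SeparableSpace X]
    (hinf : ¬ FiniteDimensional ℝ X) :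
    List.TFAE
      [OmegaCategorical X,
       ∀ (E : FinNormedSpace) (C : ℝ), 0 ≤ C → TotallyBoundedModIso E.carrier X C,
       ∃ C' : ℝ, 0 < C' ∧ ∀ C : ℝ, 0 < C → C < C' →
         ∀ E : FinNormedSpace, FinRep E X → TotallyBoundedModIso E.carrier X C] :=
  omegaCategorical_tfae_general X hinf
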